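/- For every δ > 0 and every ε > 0 there exists N > 0 such that for all x ≥ 0 and y ≥ δ with x + y ≥ N, the SIR solution S, I with initial data (x, y) satisfies v(x, y) ≤ ε (where v(x, y) = 0 if x ≤ γ/β). That is, v(x, y) → 0 as x + y → ∞ with x ≥ 0 and y ≥ δ. -/

import Mathlib

/-!
Argue by contradiction: if `S > γ/β` on `[0, ε]`, then `I` is nondecreasing there. At `τ = ε/2`
either `S τ ≤ N/2` (with `N = x + y`), and the conservation law `S + I + γ ∫ I = N` forces
`I τ ≳ N`, or `S ≥ N/2` on `[0, τ]`, and `I' ≥ (βN/2 - γ) I` makes `I τ ≥ δ e^{(βN/2 - γ)τ}`,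
which is even larger. So `I ≳ N` on `[τ, ε]`, and `S' = -βIS` makes `S ε ≤ x e^{-c N}`,
which drops below `γ/β` once `N` is large.
-/

open Set Filter

/-- An SIR solution with parameters β, γ and initial data (x, y):
differentiable functions S, I on [0,∞) with S' = -βSI, I' = βSI - γI,
S(0) = x, I(0) = y. -/
def IsSIRSolution (β γ x y : ℝ) (S I : ℝ → ℝ) : Prop :=
  S 0 = x ∧ I 0 = y ∧
  ∀ t, 0 ≤ t →
    HasDerivWithinAt S (-(β * S t * I t)) (Set.Ici 0) t ∧
    HasDerivWithinAt I (β * S t * I t - γ * I t) (Set.Ici 0) t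

open Real Topology

lemma eq_of_hasDerivAt_eq_zero {f : ℝ → ℝ} {a b : ℝ} (hab : a ≤ b)
    (hf : ContinuousOn f (Icc a b)) (hf' : ∀ t ∈ Ioo a b, HasDerivAt f 0 t) : f b = f a := by
  rcases hab.eq_or_lt with rfl | hab
  · rfl
  obtain ⟨c, -, hc⟩ := exists_hasDerivAt_eq_slope f (fun _ => 0) hab hf hf'
  rw [eq_comm, div_eq_zero_iff, sub_eq_zero] at hc
  exact hc.resolve_right (sub_ne_zero.2 hab.ne')

lemma hasDerivAt_integral_of_continuousOn {g : ℝ → ℝ} {a b t : ℝ}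
    (hg : ContinuousOn g (Icc a b)) (ht : t ∈ Ioo a b) :
    HasDerivAt (fun u => ∫ s in a..u, g s) (g t) t :=
  intervalIntegral.integral_hasDerivAt_right
    ((hg.mono (Icc_subset_Icc_right ht.2.le)).intervalIntegrable_of_Icc ht.1.le)
    ((hg.mono Ioo_subset_Icc_self).stronglyMeasurableAtFilter isOpen_Ioo t ht)
    (hg.continuousAt (Icc_mem_nhds ht.1 ht.2))

lemma continuousOn_integral_of_continuousOn {g : ℝ → ℝ} {a b : ℝ} (hab : a ≤ b)
    (hg : ContinuousOn g (Icc a b)) :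
    ContinuousOn (fun u => ∫ s in a..u, g s) (Icc a b) := by
  have h := intervalIntegral.continuousOn_primitive_interval
    (μ := MeasureTheory.volume) (a := a) (b := b) (f := g)
    (by rw [uIcc_of_le hab]; exact hg.integrableOn_Icc)
  rwa [uIcc_of_le hab] at h

section LinearODE

variable {f g : ℝ → ℝ} {a b : ℝ}

theorem eq_mul_exp_integral_of_hasDerivAt (hab : a ≤ b)
    (hf : ContinuousOn f (Icc a b)) (hg : ContinuousOn g (Icc a b))
    (hfg : ∀ t ∈ Ioo a b, HasDerivAt f (g t * f t) t) :
    f b = f a * exp (∫ t in a..b, g t) := by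
  have hconst := eq_of_hasDerivAt_eq_zero (f := fun u => f u * exp (-∫ s in a..u, g s)) hab
    (hf.mul (continuousOn_integral_of_continuousOn hab hg).neg.rexp) fun t ht =>
      ((hfg t ht).mul (hasDerivAt_integral_of_continuousOn hg ht).neg.exp).congr_deriv (by ring)
  simp only [intervalIntegral.integral_same, neg_zero, exp_zero, mul_one] at hconst
  rw [← hconst, mul_assoc, ← exp_add, neg_add_cancel, exp_zero, mul_one]

theorem le_mul_exp_of_hasDerivAt_of_le {m : ℝ} (hab : a ≤ b) (hfa : 0 ≤ f a)
    (hf : ContinuousOn f (Icc a b)) (hg : ContinuousOn g (Icc a b))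
    (hfg : ∀ t ∈ Ioo a b, HasDerivAt f (g t * f t) t) (hgm : ∀ t ∈ Icc a b, g t ≤ m) :
    f b ≤ f a * exp (m * (b - a)) := by
  rw [eq_mul_exp_integral_of_hasDerivAt hab hf hg hfg]
  gcongr
  calc ∫ t in a..b, g t ≤ ∫ _ in a..b, m :=
        intervalIntegral.integral_mono_on hab (hg.intervalIntegrable_of_Icc hab)
          intervalIntegrable_const hgm
    _ = m * (b - a) := by simp [mul_comm]

theorem mul_exp_le_of_hasDerivAt_of_le {m : ℝ} (hab : a ≤ b) (hfa : 0 ≤ f a)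
    (hf : ContinuousOn f (Icc a b)) (hg : ContinuousOn g (Icc a b))
    (hfg : ∀ t ∈ Ioo a b, HasDerivAt f (g t * f t) t) (hmg : ∀ t ∈ Icc a b, m ≤ g t) :
    f a * exp (m * (b - a)) ≤ f b := by
  rw [eq_mul_exp_integral_of_hasDerivAt hab hf hg hfg]
  gcongr
  calc m * (b - a) = ∫ _ in a..b, m := by simp [mul_comm]
    _ ≤ ∫ t in a..b, g t :=
        intervalIntegral.integral_mono_on hab intervalIntegrable_const
          (hg.intervalIntegrable_of_Icc hab) hmg

end LinearODE

lemma eventually_lt_mul_exp {A k : ℝ} (hA : 0 < A) (hk : 0 < k) :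
    ∀ᶠ u in atTop, u < A * exp (k * u) := by
  filter_upwards [(isLittleO_pow_exp_pos_mul_atTop 1 hk).def (half_pos hA)] with u hu
  rw [pow_one, Real.norm_eq_abs, Real.norm_eq_abs, abs_of_pos (exp_pos _)] at hu
  nlinarith [le_abs_self u, exp_pos (k * u)]

namespace IsSIRSolution

variable {β γ x y : ℝ} {S I : ℝ → ℝ} {a b t : ℝ}

lemma continuousOn_S (h : IsSIRSolution β γ x y S I) (ha : 0 ≤ a) : ContinuousOn S (Icc a b) :=
  fun t ht => ((h.2.2 t (ha.trans ht.1)).1.continuousWithinAt).mono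
    (Icc_subset_Ici_self.trans (Ici_subset_Ici.2 ha))

lemma continuousOn_I (h : IsSIRSolution β γ x y S I) (ha : 0 ≤ a) : ContinuousOn I (Icc a b) :=
  fun t ht => ((h.2.2 t (ha.trans ht.1)).2.continuousWithinAt).mono
    (Icc_subset_Ici_self.trans (Ici_subset_Ici.2 ha))

lemma hasDerivAt_S (h : IsSIRSolution β γ x y S I) (ht : 0 < t) :
    HasDerivAt S (-(β * I t) * S t) t :=
  ((h.2.2 t ht.le).1.hasDerivAt (Ici_mem_nhds ht)).congr_deriv (by ring)

lemma hasDerivAt_I (h : IsSIRSolution β γ x y S I) (ht : 0 < t) :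
    HasDerivAt I ((β * S t - γ) * I t) t :=
  ((h.2.2 t ht.le).2.hasDerivAt (Ici_mem_nhds ht)).congr_deriv (by ring)

lemma S_nonneg (h : IsSIRSolution β γ x y S I) (hx : 0 ≤ x) (ht : 0 ≤ t) : 0 ≤ S t := by
  rw [eq_mul_exp_integral_of_hasDerivAt ht (h.continuousOn_S le_rfl)
    ((h.continuousOn_I le_rfl).const_mul β).neg fun s hs => h.hasDerivAt_S hs.1, h.1]
  positivity

lemma I_nonneg (h : IsSIRSolution β γ x y S I) (hy : 0 ≤ y) (ht : 0 ≤ t) : 0 ≤ I t := by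
  rw [eq_mul_exp_integral_of_hasDerivAt ht (h.continuousOn_I le_rfl)
    (((h.continuousOn_S le_rfl).const_mul β).sub continuousOn_const)
    fun s hs => h.hasDerivAt_I hs.1, h.2.1]
  positivity

lemma S_le_mul_exp (h : IsSIRSolution β γ x y S I) (hβ : 0 ≤ β) (hx : 0 ≤ x) {K : ℝ}
    (ha : 0 ≤ a) (hab : a ≤ b) (hK : ∀ t ∈ Icc a b, K ≤ I t) :
    S b ≤ S a * exp (-(β * K) * (b - a)) :=
  le_mul_exp_of_hasDerivAt_of_le hab (h.S_nonneg hx ha) (h.continuousOn_S ha)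
    ((h.continuousOn_I ha).const_mul β).neg (fun _ ht => h.hasDerivAt_S (ha.trans_lt ht.1))
    fun t ht => neg_le_neg (mul_le_mul_of_nonneg_left (hK t ht) hβ)

lemma I_mul_exp_le (h : IsSIRSolution β γ x y S I) (hβ : 0 ≤ β) (hy : 0 ≤ y) {M : ℝ}
    (ha : 0 ≤ a) (hab : a ≤ b) (hM : ∀ t ∈ Icc a b, M ≤ S t) :
    I a * exp ((β * M - γ) * (b - a)) ≤ I b :=
  mul_exp_le_of_hasDerivAt_of_le hab (h.I_nonneg hy ha) (h.continuousOn_I ha)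
    (((h.continuousOn_S ha).const_mul β).sub continuousOn_const)
    (fun _ ht => h.hasDerivAt_I (ha.trans_lt ht.1))
    fun t ht => sub_le_sub_right (mul_le_mul_of_nonneg_left (hM t ht) hβ) γ

lemma antitoneOn_S (h : IsSIRSolution β γ x y S I) (hβ : 0 ≤ β) (hx : 0 ≤ x) (hy : 0 ≤ y) :
    AntitoneOn S (Ici 0) := fun a ha b _ hab => by
  simpa using h.S_le_mul_exp hβ hx ha hab fun t ht => h.I_nonneg hy (ha.trans ht.1)

lemma monotoneOn_I (h : IsSIRSolution β γ x y S I) (hβ : 0 < β) (hy : 0 ≤ y) {T : ℝ}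
    (hS : ∀ t ∈ Icc 0 T, γ / β ≤ S t) : MonotoneOn I (Icc 0 T) := fun a ha b hb hab => by
  simpa [mul_div_cancel₀ _ hβ.ne'] using h.I_mul_exp_le hβ.le hy ha.1 hab
    fun t ht => hS t ⟨ha.1.trans ht.1, ht.2.trans hb.2⟩

lemma S_add_I_add_integral (h : IsSIRSolution β γ x y S I) (ht : 0 ≤ t) :
    S t + I t + γ * ∫ s in 0..t, I s = x + y := by
  have hconst := eq_of_hasDerivAt_eq_zero (f := fun u => S u + I u + γ * ∫ s in 0..u, I s) ht
    (((h.continuousOn_S le_rfl).add (h.continuousOn_I le_rfl)).add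
      ((continuousOn_integral_of_continuousOn ht (h.continuousOn_I le_rfl)).const_mul γ))
    fun s hs => (((h.hasDerivAt_S hs.1).add (h.hasDerivAt_I hs.1)).add
      ((hasDerivAt_integral_of_continuousOn (h.continuousOn_I le_rfl) hs).const_mul γ)).congr_deriv
        (by ring)
  simpa [h.1, h.2.1] using hconst

lemma min_le_I (h : IsSIRSolution β γ x y S I) (hβ : 0 < β) (hγ : 0 ≤ γ) (hx : 0 ≤ x)
    (hy : 0 ≤ y) {τ : ℝ} (hτ : 0 ≤ τ) (hS : ∀ t ∈ Icc 0 τ, γ / β ≤ S t) :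
    min ((x + y) / (2 * (1 + γ * τ))) (y * exp ((β * ((x + y) / 2) - γ) * τ)) ≤ I τ := by
  rcases le_or_gt (S τ) ((x + y) / 2) with hSτ | hSτ
  · refine min_le_of_left_le ?_
    have hmono := h.monotoneOn_I hβ hy hS
    have hint : ∫ s in 0..τ, I s ≤ ∫ _ in 0..τ, I τ :=
      intervalIntegral.integral_mono_on hτ ((h.continuousOn_I le_rfl).intervalIntegrable_of_Icc hτ)
        intervalIntegrable_const fun s hs => hmono hs ⟨hτ, le_rfl⟩ hs.2
    have hcons := h.S_add_I_add_integral hτ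
    rw [intervalIntegral.integral_const, smul_eq_mul, sub_zero] at hint
    rw [div_le_iff₀ (by positivity)]
    nlinarith [mul_le_mul_of_nonneg_left hint hγ]
  · refine min_le_of_right_le ?_
    simpa [h.2.1] using h.I_mul_exp_le hβ.le hy le_rfl hτ fun t ht =>
      hSτ.le.trans (h.antitoneOn_S hβ.le hx hy ht.1 hτ ht.2)

lemma S_two_mul_le (h : IsSIRSolution β γ x y S I) (hβ : 0 < β) (hγ : 0 ≤ γ) (hx : 0 ≤ x)
    (hy : 0 ≤ y) {τ : ℝ} (hτ : 0 ≤ τ) (hS : ∀ t ∈ Icc 0 (2 * τ), γ / β ≤ S t)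
    (hgrowth : (x + y) / (2 * (1 + γ * τ)) ≤ y * exp ((β * ((x + y) / 2) - γ) * τ)) :
    S (2 * τ) ≤ x * exp (-(β * τ / (2 * (1 + γ * τ)) * (x + y))) := by
  set K := (x + y) / (2 * (1 + γ * τ))
  have hττ : τ ≤ 2 * τ := by linarith
  have hIτ : K ≤ I τ := (min_eq_left hgrowth).symm.trans_le
    (h.min_le_I hβ hγ hx hy hτ fun t ht => hS t ⟨ht.1, ht.2.trans hττ⟩)
  have hI : ∀ t ∈ Icc τ (2 * τ), K ≤ I t := fun t ht =>
    hIτ.trans (h.monotoneOn_I hβ hy hS ⟨hτ, hττ⟩ ⟨hτ.trans ht.1, ht.2⟩ ht.1)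
  calc S (2 * τ) ≤ S τ * exp (-(β * K) * (2 * τ - τ)) := h.S_le_mul_exp hβ.le hx hτ hττ hI
    _ ≤ x * exp (-(β * K) * (2 * τ - τ)) := by
      gcongr
      exact h.1 ▸ h.antitoneOn_S hβ.le hx hy self_mem_Ici hτ hτ
    _ = x * exp (-(β * τ / (2 * (1 + γ * τ)) * (x + y))) := by
      congr 2; simp only [K]; ring

end IsSIRSolution

theorem stmt_17 (β γ : ℝ) (hβ : 0 < β) (hγ : 0 < γ) (δ : ℝ) (hδ : 0 < δ)
    (ε : ℝ) (hε : 0 < ε) :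
    ∃ N : ℝ, 0 < N ∧
      ∀ x y : ℝ, 0 ≤ x → δ ≤ y → N ≤ x + y →
        ∀ S I : ℝ → ℝ, IsSIRSolution β γ x y S I →
          ∀ v : ℝ, IsLeast {t : ℝ | 0 ≤ t ∧ S t ≤ γ / β} v → v ≤ ε := by
  set τ := ε / 2
  have hε2 : 2 * τ = ε := mul_div_cancel₀ ε two_ne_zero
  set c := 2 * (1 + γ * τ)
  have hc : 0 < c := by positivity
  obtain ⟨N, hN⟩ := eventually_atTop.1
    ((eventually_lt_mul_exp (div_pos hγ hβ) (k := β * τ / c) (by positivity)).and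
      (eventually_lt_mul_exp (A := c * δ * exp (-(γ * τ))) (k := β * τ / 2) (by positivity)
        (by positivity)))
  refine ⟨max N 1, by positivity, fun x y hx hy hxy S I h v hv => ?_⟩
  obtain ⟨hdecay, hgrowth⟩ := hN (x + y) (le_of_max_le_left hxy)
  by_contra! hεv
  have hS : ∀ t ∈ Icc 0 ε, γ / β < S t := fun t ht =>
    lt_of_not_ge fun hSt => (hv.2 ⟨ht.1, hSt⟩).not_gt (ht.2.trans_lt hεv)
  have hIτ : (x + y) / c ≤ y * exp ((β * ((x + y) / 2) - γ) * τ) := by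
    rw [div_le_iff₀ hc]
    calc x + y ≤ c * δ * exp (-(γ * τ)) * exp (β * τ / 2 * (x + y)) := hgrowth.le
      _ = δ * exp ((β * ((x + y) / 2) - γ) * τ) * c := by
        rw [mul_assoc, ← exp_add]; ring_nf
      _ ≤ y * exp ((β * ((x + y) / 2) - γ) * τ) * c := by gcongr
  have hSε := hε2 ▸ h.S_two_mul_le hβ hγ.le hx (hδ.le.trans hy) (by positivity)
    (fun t ht => (hS t (hε2 ▸ ht)).le) hIτ
  have hxy : x * exp (-(β * τ / c * (x + y))) < γ / β := by
    rw [exp_neg, ← div_eq_mul_inv, div_lt_iff₀ (exp_pos _)]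
    linarith
  linarith [hS ε ⟨hε.le, le_rfl⟩]
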